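/- Let m, n ≥ 0, let λ ∈ Λ_{n+1} with λ ⊂ m^{n+1}, and let μ ∈ Λ_n with μ ⊂ m^n. Then there exists ν ∈ Λ_m with ν ⊂ (n^m − μ′) and ν ⊂ ((n+1)^m − λ′) such that (n^m − μ′)/ν and ((n+1)^m − λ′)/ν are vertical strips, if and only if there exists κ ∈ Λ_n such that (m^n − μ)/κ and (m^{n+1} − λ)/κ (with κ regarded as an element of Λ_{n+1}) are horizontal strips. -/

import Mathlib

open Finset

/-- `l` is a partition with at most `N` parts: `l 1 ≥ l 2 ≥ ⋯ ≥ l N (≥ 0)`. -/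
def IsPartition {N : ℕ} (l : Fin N → ℕ) : Prop :=
  ∀ i j : Fin N, i ≤ j → l j ≤ l i

/-- Containment of diagrams: `μ ⊂ l`. -/
def SubDiag {N : ℕ} (μ l : Fin N → ℕ) : Prop := ∀ j, μ j ≤ l j

/-- The weight `|l| = l 1 + ⋯ + l N`. -/
def wt {N : ℕ} (l : Fin N → ℕ) : ℕ := ∑ j, l j

/-- The skew diagram `l/μ` is a vertical strip: `μ j ≤ l j ≤ μ j + 1` for all `j`. -/
def VStrip {N : ℕ} (l μ : Fin N → ℕ) : Prop :=
  ∀ j, μ j ≤ l j ∧ l j ≤ μ j + 1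

/-- The skew diagram `l/μ` is a horizontal strip:
`l 1 ≥ μ 1 ≥ l 2 ≥ μ 2 ≥ ⋯ ≥ l N ≥ μ N` (interlacing). -/
def HStrip {N : ℕ} (l μ : Fin N → ℕ) : Prop :=
  (∀ j, μ j ≤ l j) ∧ ∀ (j : ℕ) (h : j + 1 < N), l ⟨j + 1, h⟩ ≤ μ ⟨j, by omega⟩

/-- `|l/μ| = |l| - |μ|` (for `μ ⊂ l`). -/
def skewWt {N : ℕ} (l μ : Fin N → ℕ) : ℕ := ∑ j, (l j - μ j)

/-- The proximity relation `μ ∼_r l`: there is a partition `ν ⊂ l, ν ⊂ μ` such that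
`l/ν` and `μ/ν` are vertical strips with `|l/ν| + |μ/ν| ≤ r`. -/
def simRel {N : ℕ} (r : ℕ) (μ l : Fin N → ℕ) : Prop :=
  ∃ ν : Fin N → ℕ, IsPartition ν ∧ SubDiag ν l ∧ SubDiag ν μ ∧
    VStrip l ν ∧ VStrip μ ν ∧ skewWt l ν + skewWt μ ν ≤ r

/-- `μ ⪯ l`: there is a partition `ν` with `μ ⊂ ν ⊂ l` such that `l/ν` and `ν/μ`
are horizontal strips. -/
def preceq {N : ℕ} (μ l : Fin N → ℕ) : Prop :=
  ∃ ν : Fin N → ℕ, IsPartition ν ∧ SubDiag μ ν ∧ SubDiag ν l ∧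
    HStrip l ν ∧ HStrip ν μ

/-- The conjugate partition `l′ ∈ Λ_m` (for `l ∈ Λ_N` with `l 1 ≤ m`):
`l′ i = #{j : l j ≥ i}` (here `i : Fin m` is 0-based, so `i+1`-th row). -/
def conjP {N : ℕ} (m : ℕ) (l : Fin N → ℕ) : Fin m → ℕ :=
  fun i => (Finset.univ.filter (fun j : Fin N => (i : ℕ) + 1 ≤ l j)).card

/-- The rectangular partition `m^N ∈ Λ_N`. -/
def rectP (m N : ℕ) : Fin N → ℕ := fun _ => m

/-- The complement `m^N − l` of `l ⊂ m^N` in `Λ_N`: `(m^N − l) j = m − l (N+1−j)`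
(1-based), i.e. `m - l j.rev` (0-based). -/
def complP {N : ℕ} (m : ℕ) (l : Fin N → ℕ) : Fin N → ℕ :=
  fun j => m - l j.rev

/-- The natural embedding `Λ_N ↪ Λ_{N+1}` by appending a zero part. -/
def extendP {N : ℕ} (l : Fin N → ℕ) : Fin (N + 1) → ℕ := Fin.snoc l 0

/-
Conjugation exchanges horizontal and vertical strips between partitions fitting in the
`N × m` box, and it commutes with complementation: `(m^N − l)′ = N^m − l′`. So the
existence claim on the left is the conjugate of the one on the right, with `κ = ν′`;
appending a zero part to `κ` does not change `κ′`.
-/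

section Conjugate

variable {N m : ℕ}

lemma conjP_isPartition (l : Fin N → ℕ) : IsPartition (conjP m l) :=
  fun i j hij => card_le_card <| monotone_filter_right _ fun k _ (hk : (j : ℕ) + 1 ≤ l k) =>
    (show (i : ℕ) + 1 ≤ j + 1 by simpa using hij).trans hk

lemma conjP_mono {a b : Fin N → ℕ} (h : ∀ j, b j ≤ a j) (i : Fin m) :
    conjP m b i ≤ conjP m a i :=
  card_le_card <| monotone_filter_right _ fun j _ (hj : (i : ℕ) + 1 ≤ b j) => hj.trans (h j)

lemma conjP_le (l : Fin N → ℕ) (i : Fin m) : conjP m l i ≤ N :=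
  (card_filter_le _ _).trans_eq (card_fin N)

lemma IsPartition.lt_conjP_iff {l : Fin N → ℕ} (hl : IsPartition l) (i : Fin m) (j : Fin N) :
    (j : ℕ) < conjP m l i ↔ (i : ℕ) < l j :=
  Fin.lt_card_filter_univ_iff_apply_of_imp _ fun _ _ hkj h => h.trans (hl _ _ hkj)

lemma conjP_conjP {l : Fin N → ℕ} (hl : IsPartition l) (hlm : ∀ j, l j ≤ m) :
    conjP N (conjP m l) = l := by
  funext j
  calc conjP N (conjP m l) j = #{i : Fin m | (i : ℕ) < l j} :=
        congrArg card <| filter_congr fun i _ => hl.lt_conjP_iff i j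
    _ = l j := by rw [Fin.card_filter_val_lt, min_eq_right (hlm j)]

lemma card_filter_le_card_filter_add_one {a b : Fin (N + 1) → ℕ}
    (h : ∀ j : Fin N, a j.succ ≤ b j.castSucc) (t : ℕ) :
    #{j | t ≤ a j} ≤ #{j | t ≤ b j} + 1 := by
  rw [Fin.card_filter_univ_succ']
  have : #{j : Fin N | t ≤ a j.succ} ≤ #{j | t ≤ b j} :=
    card_le_card_of_injOn Fin.castSucc
      (fun j hj => by simpa using (by simpa using hj : t ≤ a j.succ).trans (h j))
      (Fin.castSucc_injective N).injOn
  split_ifs <;> omega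

lemma HStrip.vStrip_conjP {a b : Fin N → ℕ} (h : HStrip a b) :
    VStrip (conjP m a) (conjP m b) := by
  refine fun i => ⟨conjP_mono h.1 i, ?_⟩
  cases N with
  | zero => simp [conjP]
  | succ N => exact card_filter_le_card_filter_add_one (fun j => h.2 j (by omega)) _

lemma hStrip_iff_vStrip_conjP {a b : Fin N → ℕ} (ha : IsPartition a) (hb : IsPartition b)
    (ham : ∀ j, a j ≤ m) (hbm : ∀ j, b j ≤ m) :
    HStrip a b ↔ VStrip (conjP m a) (conjP m b) := by
  refine ⟨HStrip.vStrip_conjP, fun h => ⟨fun j => ?_, fun j hj => ?_⟩⟩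
  · simpa only [conjP_conjP ha ham, conjP_conjP hb hbm] using conjP_mono (fun i => (h i).1) j
  · -- read off the interlacing in the column of the last box of row `j + 1` of `a`
    obtain h0 | hpos := Nat.eq_zero_or_pos (a ⟨j + 1, hj⟩)
    · omega
    set i : Fin m := ⟨a ⟨j + 1, hj⟩ - 1, by have := ham ⟨j + 1, hj⟩; omega⟩
    have hai : j + 1 < conjP m a i := (ha.lt_conjP_iff i ⟨j + 1, hj⟩).2 (by simp [i]; omega)
    have hbi : j < conjP m b i := by have := (h i).2; omega
    have := (hb.lt_conjP_iff i ⟨j, by omega⟩).1 hbi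
    simp only [i] at this
    omega

lemma complP_isPartition {l : Fin N → ℕ} (hl : IsPartition l) : IsPartition (complP m l) :=
  fun _ _ hij => Nat.sub_le_sub_left (hl _ _ (Fin.rev_le_rev.2 hij)) m

lemma complP_conjP {l : Fin N → ℕ} (hlm : ∀ j, l j ≤ m) :
    complP N (conjP m l) = conjP m (complP m l) := by
  funext i
  have hrev : conjP m (complP m l) i = #{j | (i : ℕ) + 1 ≤ m - l j} :=
    card_equiv Fin.revPerm (by simp [complP])
  have hcompl : #{j | (i : ℕ) + 1 ≤ m - l j} = #{j | ¬ ((i.rev : ℕ) + 1 ≤ l j)} :=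
    congrArg card <| filter_congr fun j _ => by have := hlm j; rw [Fin.val_rev]; omega
  rw [complP, hrev, hcompl, ← compl_filter, card_compl, Fintype.card_fin]
  rfl

lemma extendP_isPartition {l : Fin N → ℕ} (hl : IsPartition l) : IsPartition (extendP l) := by
  intro i j hij
  induction j using Fin.lastCases with
  | last => simp [extendP]
  | cast j =>
    induction i using Fin.lastCases with
    | last => exact absurd hij (by simp)
    | cast i => simpa [extendP] using hl i j hij

lemma extendP_le {l : Fin N → ℕ} (hlm : ∀ j, l j ≤ m) (j : Fin (N + 1)) : extendP l j ≤ m := by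
  induction j using Fin.lastCases <;> simp [extendP, hlm]

lemma conjP_extendP (l : Fin N → ℕ) : conjP m (extendP l) = conjP m l := by
  funext i
  rw [conjP, conjP, card_filter, card_filter, Fin.sum_univ_castSucc]
  simp [extendP]

end Conjugate

/-- For `λ ∈ Λ_{n+1}` with `λ ⊂ m^{n+1}` and `μ ∈ Λ_n` with `μ ⊂ m^n`:
there is a partition `ν ∈ Λ_m` with `ν ⊂ n^m − μ′`, `ν ⊂ (n+1)^m − λ′` such that
`(n^m − μ′)/ν` and `((n+1)^m − λ′)/ν` are vertical strips, iff there is `κ ∈ Λ_n` such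
that `(m^n − μ)/κ` and `(m^{n+1} − λ)/κ` (with `κ ∈ Λ_{n+1}`) are horizontal strips. -/
theorem statement11 (m n : ℕ) (lam : Fin (n + 1) → ℕ) (hlam : IsPartition lam)
    (hlamb : SubDiag lam (rectP m (n + 1)))
    (mu : Fin n → ℕ) (hmu : IsPartition mu) (hmub : SubDiag mu (rectP m n)) :
    (∃ nu : Fin m → ℕ, IsPartition nu ∧
        SubDiag nu (complP n (conjP m mu)) ∧
        SubDiag nu (complP (n + 1) (conjP m lam)) ∧
        VStrip (complP n (conjP m mu)) nu ∧
        VStrip (complP (n + 1) (conjP m lam)) nu) ↔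
      (∃ kap : Fin n → ℕ, IsPartition kap ∧
        HStrip (complP m mu) kap ∧
        HStrip (complP m lam) (extendP kap)) := by
  rw [complP_conjP hmub, complP_conjP hlamb]
  constructor
  · rintro ⟨nu, hnu, -, -, hvmu, hvlam⟩
    have hnun : ∀ i, nu i ≤ n := fun i => (hvmu i).1.trans (conjP_le _ i)
    have hkap := conjP_isPartition (m := n) nu
    refine ⟨conjP n nu, hkap, ?_, ?_⟩
    · rwa [hStrip_iff_vStrip_conjP (complP_isPartition hmu) hkap (fun _ => Nat.sub_le _ _)
        (conjP_le nu), conjP_conjP hnu hnun]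
    · rwa [hStrip_iff_vStrip_conjP (complP_isPartition hlam) (extendP_isPartition hkap)
        (fun _ => Nat.sub_le _ _) (extendP_le (conjP_le nu)), conjP_extendP,
        conjP_conjP hnu hnun]
  · rintro ⟨kap, -, hmukap, hlamkap⟩
    have hvmu := hmukap.vStrip_conjP (m := m)
    have hvlam := hlamkap.vStrip_conjP (m := m)
    rw [conjP_extendP] at hvlam
    exact ⟨conjP m kap, conjP_isPartition kap, fun i => (hvmu i).1, fun i => (hvlam i).1,
      hvmu, hvlam⟩
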